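/- Let (X, μ, T₁, T₂) be a probability-preserving system where T₁ and T₂ are commuting invertible measure-preserving transformations whose joint action (as a ℤ²-action) is ergodic. If A₁ ⊆ X is measurable and T₁-invariant and A₂ ⊆ X is measurable and T₂-invariant, then μ(A₁ ∩ A₂) = μ(A₁)·μ(A₂). -/

import Mathlib

/-!
Let `g` be the orthogonal projection of `1_{A₁}` onto the `T₂`-invariant vectors of `L²(μ)`.
By von Neumann's mean ergodic theorem `g` is the `L²`-limit of the `T₂`-Birkhoff averages of
`1_{A₁}`; these are `T₁`-invariant because `T₁` commutes with `T₂` and fixes `1_{A₁}`, so `g`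
is invariant under both maps and hence a.e. equal to a constant `c` by ergodicity. Since `1` and
`1_{A₂}` are `T₂`-invariant, pairing them with `1_{A₁}` and with `g` gives `μ A₁ = c` and
`μ (A₁ ∩ A₂) = μ A₂ * c`.
-/

open MeasureTheory Filter Function Set
open scoped ENNReal InnerProductSpace

section MeanErgodic

variable {𝕜 E : Type*} [RCLike 𝕜] [NormedAddCommGroup E] [InnerProductSpace 𝕜 E] [CompleteSpace E]

theorem ContinuousLinearMap.isFixedPt_starProjection_eqLocus {f g : E →L[𝕜] E} (hf : ‖f‖ ≤ 1)
    (hfg : Function.Commute f g) {x : E} (hx : IsFixedPt g x) :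
    IsFixedPt g ((f.eqLocus (1 : E →L[𝕜] E)).starProjection x) := by
  have hlim := f.tendsto_birkhoffAverage_orthogonalProjection hf x
  have hfix : ∀ N, g (birkhoffAverage 𝕜 f _root_.id N x) = birkhoffAverage 𝕜 f _root_.id N x := by
    intro N
    rw [map_birkhoffAverage 𝕜 𝕜 g]
    exact congrArg _ (Finset.sum_congr rfl fun k _ =>
      (hfg.iterate_left k x).symm.trans (congrArg _ hx))
  exact tendsto_nhds_unique (((g.continuous.tendsto _).comp hlim).congr hfix) hlim

end MeanErgodic

section Koopman

variable {X E : Type*} [MeasurableSpace X] {μ : Measure X} [NormedAddCommGroup E]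
  [NormedSpace ℝ E] {p : ℝ≥0∞} [Fact (1 ≤ p)] {T T' : X → X}

variable (E p) in
noncomputable def koopman (hT : MeasurePreserving T μ μ) : Lp E p μ →L[ℝ] Lp E p μ :=
  (Lp.compMeasurePreservingₗᵢ ℝ T hT).toContinuousLinearMap

theorem koopman_apply (hT : MeasurePreserving T μ μ) (g : Lp E p μ) :
    koopman E p hT g = Lp.compMeasurePreserving T hT g :=
  rfl

theorem norm_koopman_le (hT : MeasurePreserving T μ μ) : ‖koopman E p hT‖ ≤ 1 :=
  LinearIsometry.norm_toContinuousLinearMap_le _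

theorem commute_koopman (hT : MeasurePreserving T μ μ) (hT' : MeasurePreserving T' μ μ)
    (h : Function.Commute T T') : Function.Commute (koopman E p hT) (koopman E p hT') := by
  intro g
  simp only [koopman_apply, ← Lp.compMeasurePreserving_comp_apply]
  congr 2
  exact h.comp_eq.symm

theorem comp_ae_eq_of_isFixedPt_koopman (hT : MeasurePreserving T μ μ) {g : Lp E p μ}
    (hg : IsFixedPt (koopman E p hT) g) : g ∘ T =ᵐ[μ] g := by
  have h : koopman E p hT g =ᵐ[μ] g ∘ T := Lp.coeFn_compMeasurePreserving g hT
  rw [hg.eq] at h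
  exact h.symm

theorem isFixedPt_koopman_indicatorConstLp (hT : MeasurePreserving T μ μ) {s : Set X}
    (hs : MeasurableSet s) (hμs : μ s ≠ ∞) (c : E) (hinv : T ⁻¹' s =ᵐ[μ] s) :
    IsFixedPt (koopman E p hT) (indicatorConstLp p hs hμs c) := by
  change Lp.compMeasurePreserving T hT _ = _
  rw [Lp.indicatorConstLp_compMeasurePreserving]
  exact (MemLp.toLp_eq_toLp_iff _ _).2 (indicator_ae_eq_of_ae_eq_set hinv)

theorem isFixedPt_koopman_const [IsFiniteMeasure μ] (hT : MeasurePreserving T μ μ) (c : E) :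
    IsFixedPt (koopman E p hT) (Lp.const p μ c) := by
  rw [← indicatorConstLp_univ]
  exact isFixedPt_koopman_indicatorConstLp hT _ _ c (by simp)

end Koopman

section Independence

variable {X : Type*} [MeasurableSpace X] {μ : Measure X} [IsProbabilityMeasure μ]

theorem exists_ae_eq_const_of_comp_ae_eq {T₁ T₂ : X → X}
    (herg : ∀ S, MeasurableSet S → T₁ ⁻¹' S =ᵐ[μ] S → T₂ ⁻¹' S =ᵐ[μ] S → μ S = 0 ∨ μ S = 1)
    {Y : Type*} [Nonempty Y] [MeasurableSpace Y] [MeasurableSpace.CountablySeparated Y]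
    {g : X → Y} (hg : Measurable g) (h₁ : g ∘ T₁ =ᵐ[μ] g) (h₂ : g ∘ T₂ =ᵐ[μ] g) :
    ∃ c, g =ᵐ[μ] const X c := by
  have hpre : ∀ {T : X → X}, g ∘ T =ᵐ[μ] g → ∀ U, T ⁻¹' (g ⁻¹' U) =ᵐ[μ] g ⁻¹' U :=
    fun hT U => (hT.mono fun x hx => by rw [← preimage_comp, mem_preimage, mem_preimage, hx]).set_eq
  refine exists_eventuallyEq_const_of_forall_separating MeasurableSet fun U hU => ?_
  rcases herg _ (hg hU) (hpre h₁ U) (hpre h₂ U) with h0 | h1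
  · exact Or.inr (measure_eq_zero_iff_ae_notMem.1 h0)
  · exact Or.inl ((ae_mem_iff_measure_eq (hg hU).nullMeasurableSet).2 (by rw [h1, measure_univ]))

theorem measure_inter_eq_mul_of_starProjection_ae_eq_const
    (K : Submodule ℝ (Lp ℝ 2 μ)) [K.HasOrthogonalProjection] {A₁ A₂ : Set X}
    (hA₁ : MeasurableSet A₁) (hA₂ : MeasurableSet A₂) (h_one : Lp.const 2 μ (1 : ℝ) ∈ K)
    (hA₂K : indicatorConstLp 2 hA₂ (measure_ne_top μ A₂) (1 : ℝ) ∈ K) {c : ℝ}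
    (hc : K.starProjection (indicatorConstLp 2 hA₁ (measure_ne_top μ A₁) (1 : ℝ))
      =ᵐ[μ] fun _ => c) :
    μ (A₁ ∩ A₂) = μ A₁ * μ A₂ := by
  set f₁ := indicatorConstLp 2 hA₁ (measure_ne_top μ A₁) (1 : ℝ)
  have hinner : ∀ {s : Set X} (hs : MeasurableSet s),
      indicatorConstLp 2 hs (measure_ne_top μ s) (1 : ℝ) ∈ K → μ.real (A₁ ∩ s) = μ.real s * c := by
    intro s hs hsK
    set e := indicatorConstLp 2 hs (measure_ne_top μ s) (1 : ℝ)
    have hproj : ⟪e, f₁⟫_ℝ = ⟪e, K.starProjection f₁⟫_ℝ := by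
      rw [← K.inner_starProjection_left_eq_right, K.starProjection_eq_self_iff.2 hsK]
    rwa [L2.inner_indicatorConstLp_one, L2.inner_indicatorConstLp_one,
      setIntegral_indicatorConstLp hs, setIntegral_congr_ae hs (hc.mono fun x hx _ => hx),
      setIntegral_const, smul_eq_mul, smul_eq_mul, mul_one] at hproj
  rw [← indicatorConstLp_univ] at h_one
  have hA₁c : μ.real A₁ = c := by
    simpa using hinner MeasurableSet.univ h_one
  have h := hinner hA₂ hA₂K
  rw [← hA₁c, mul_comm, measureReal_def, measureReal_def, measureReal_def,
    ← ENNReal.toReal_mul] at h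
  exact (ENNReal.toReal_eq_toReal_iff' (measure_ne_top _ _) (by finiteness)).1 h

end Independence

theorem stmt_0_general {X : Type*} [MeasurableSpace X] (μ : Measure X) [IsProbabilityMeasure μ]
    (T₁ T₂ : Equiv.Perm X)
    (hT₁ : MeasurePreserving T₁ μ μ)
    (hT₂ : MeasurePreserving T₂ μ μ)
    (hcomm : ∀ x, T₁ (T₂ x) = T₂ (T₁ x))
    (herg : ∀ S : Set X, MeasurableSet S → μ (symmDiff (⇑T₁ ⁻¹' S) S) = 0 →
      μ (symmDiff (⇑T₂ ⁻¹' S) S) = 0 → μ S = 0 ∨ μ S = 1)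
    (A₁ A₂ : Set X) (hA₁ : MeasurableSet A₁) (hA₂ : MeasurableSet A₂)
    (hinv₁ : μ (symmDiff (⇑T₁ ⁻¹' A₁) A₁) = 0)
    (hinv₂ : μ (symmDiff (⇑T₂ ⁻¹' A₂) A₂) = 0) :
    μ (A₁ ∩ A₂) = μ A₁ * μ A₂ := by
  set U₁ := koopman ℝ 2 hT₁
  set U₂ := koopman ℝ 2 hT₂
  set g := (U₂.eqLocus (1 : Lp ℝ 2 μ →L[ℝ] Lp ℝ 2 μ)).starProjection
    (indicatorConstLp 2 hA₁ (measure_ne_top μ A₁) (1 : ℝ))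
  have hg₁ : IsFixedPt U₁ g :=
    U₂.isFixedPt_starProjection_eqLocus (norm_koopman_le hT₂)
      (commute_koopman hT₂ hT₁ fun x => (hcomm x).symm)
      (isFixedPt_koopman_indicatorConstLp hT₁ _ _ _ (measure_symmDiff_eq_zero_iff.1 hinv₁))
  have hg₂ : IsFixedPt U₂ g := LinearMap.mem_eqLocus.1 (Submodule.starProjection_apply_mem _ _)
  obtain ⟨c, hc⟩ := exists_ae_eq_const_of_comp_ae_eq
    (fun S hS h₁ h₂ => herg S hS (measure_symmDiff_eq_zero_iff.2 h₁)
      (measure_symmDiff_eq_zero_iff.2 h₂))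
    (Lp.stronglyMeasurable g).measurable (comp_ae_eq_of_isFixedPt_koopman hT₁ hg₁)
    (comp_ae_eq_of_isFixedPt_koopman hT₂ hg₂)
  exact measure_inter_eq_mul_of_starProjection_ae_eq_const _ hA₁ hA₂
    (isFixedPt_koopman_const hT₂ 1)
    (isFixedPt_koopman_indicatorConstLp hT₂ _ _ _ (measure_symmDiff_eq_zero_iff.1 hinv₂)) hc

/-- If the joint ℤ²-action of two commuting invertible measure-preserving
transformations is ergodic, then a `T₁`-invariant set and a `T₂`-invariant set
are independent. -/
theorem stmt_0 {X : Type*} [MeasurableSpace X] (μ : Measure X) [IsProbabilityMeasure μ]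
    (T₁ T₂ : Equiv.Perm X)
    (hT₁ : MeasurePreserving T₁ μ μ) (hT₁' : MeasurePreserving T₁.symm μ μ)
    (hT₂ : MeasurePreserving T₂ μ μ) (hT₂' : MeasurePreserving T₂.symm μ μ)
    (hcomm : ∀ x, T₁ (T₂ x) = T₂ (T₁ x))
    (herg : ∀ S : Set X, MeasurableSet S → μ (symmDiff (⇑T₁ ⁻¹' S) S) = 0 →
      μ (symmDiff (⇑T₂ ⁻¹' S) S) = 0 → μ S = 0 ∨ μ S = 1)
    (A₁ A₂ : Set X) (hA₁ : MeasurableSet A₁) (hA₂ : MeasurableSet A₂)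
    (hinv₁ : μ (symmDiff (⇑T₁ ⁻¹' A₁) A₁) = 0)
    (hinv₂ : μ (symmDiff (⇑T₂ ⁻¹' A₂) A₂) = 0) :
    μ (A₁ ∩ A₂) = μ A₁ * μ A₂ :=
  stmt_0_general μ T₁ T₂ hT₁ hT₂ hcomm herg A₁ A₂ hA₁ hA₂ hinv₁ hinv₂
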